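/- arXiv:2209.14728 — 7 statements merged into one kernel-verified Lean document; each statement's English description precedes it below -/
import Mathlib

section
/- In a Markov category C, an object X_π is a support of a state π : I → X (i.e., represents the functor C(X,-)/=_π-a.s.) if and only if there exists a section–retraction pair i : X_π → X, r : X → X_π with i ; r = id_{X_π}, such that for all f, g : X → Y, f =_π-a.s. g if and only if i ; f = i ; g. -/
open CategoryTheory MonoidalCategory

universe v u

class MarkovCategory (C : Type u) [Category.{v} C] [MonoidalCategory C] [SymmetricCategory C] where
  copy : ∀ X : C, X ⟶ X ⊗ X
  del : ∀ X : C, X ⟶ 𝟙_ C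
  copy_del_left : ∀ X : C, copy X ≫ (del X ▷ X) = (λ_ X).inv
  copy_del_right : ∀ X : C, copy X ≫ (X ◁ del X) = (ρ_ X).inv
  copy_assoc : ∀ X : C, copy X ≫ (copy X ▷ X) ≫ (α_ X X X).hom = copy X ≫ (X ◁ copy X)
  copy_comm : ∀ X : C, copy X ≫ (β_ X X).hom = copy X
  del_natural : ∀ {X Y : C} (f : X ⟶ Y), f ≫ del Y = del X
  copy_tensor : ∀ X Y : C, copy (X ⊗ Y) = (copy X ⊗ₘ copy Y) ≫ tensorμ X X Y Y
  del_tensor : ∀ X Y : C, del (X ⊗ Y) = (del X ⊗ₘ del Y) ≫ (λ_ (𝟙_ C)).hom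
  copy_unit : copy (𝟙_ C) = (λ_ (𝟙_ C)).inv
  del_unit : del (𝟙_ C) = 𝟙 (𝟙_ C)

namespace MarkovCategory

variable {C : Type u} [Category.{v} C] [MonoidalCategory C] [SymmetricCategory C] [_root_.MarkovCategory C]

/-- `f` is `π`-almost-surely equal to `g`. -/
def AsEq {X Y : C} (π : 𝟙_ C ⟶ X) (f g : X ⟶ Y) : Prop :=
  π ≫ copy X ≫ (X ◁ f) = π ≫ copy X ≫ (X ◁ g)

/-- `h` is a Bayesian inverse of `f` at the prior `π`. -/
def BayesInv {X Y : C} (π : 𝟙_ C ⟶ X) (f : X ⟶ Y) (h : Y ⟶ X) : Prop :=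
  π ≫ copy X ≫ (X ◁ f) = π ≫ f ≫ copy Y ≫ (h ▷ Y)

/-- Left marginal of a state on a tensor product. -/
def margL {X Y : C} (π : 𝟙_ C ⟶ X ⊗ Y) : 𝟙_ C ⟶ X :=
  π ≫ (X ◁ del Y) ≫ (ρ_ X).hom

/-- Right marginal of a state on a tensor product. -/
def margR {X Y : C} (π : 𝟙_ C ⟶ X ⊗ Y) : 𝟙_ C ⟶ Y :=
  π ≫ (del X ▷ Y) ≫ (λ_ Y).hom

end MarkovCategory

namespace MarkovCategory

variable {C : Type u} [Category.{v} C] [MonoidalCategory C] [SymmetricCategory C] [_root_.MarkovCategory C]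

lemma AsEq.comp {X Y Z : C} {π : 𝟙_ C ⟶ X} {f g : X ⟶ Y} (h : AsEq π f g) (k : Y ⟶ Z) :
    AsEq π (f ≫ k) (g ≫ k) := by
  unfold AsEq at *
  simp only [MonoidalCategory.whiskerLeft_comp]
  simpa [Category.assoc] using congrArg (· ≫ (X ◁ k)) h

/-- The covariant functor `Y ↦ C(X, Y)/=_π` of morphisms out of `X` modulo
`π`-almost-sure equality. -/
def QFunctor {X : C} (π : 𝟙_ C ⟶ X) : C ⥤ Type v where
  obj Y := Quot (fun f g : X ⟶ Y => AsEq π f g)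
  map k := TypeCat.ofHom (Quot.map (· ≫ k) (fun _ _ h => AsEq.comp h k))
  map_id Y := by
    ext q
    induction q using Quot.ind with
    | _ f => simp [Quot.map]
  map_comp k l := by
    ext q
    induction q using Quot.ind with
    | _ f => simp [Quot.map]

/-- An object `Xπ` is a support of the state `π` iff it (co)represents the functor
`Y ↦ C(X, Y)/=_π`. -/
def IsSupport {X : C} (π : 𝟙_ C ⟶ X) (Xπ : C) : Prop :=
  Nonempty (coyoneda.obj (Opposite.op Xπ) ≅ QFunctor π)

/-!
By Yoneda, a corepresentation `C(Xπ, -) ≅ C(X, -)/=_π` is `k ↦ [r ≫ k]` for `[r]` the image of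
`𝟙 Xπ`, and its inverse is `[f] ↦ i ≫ f` for `i` the preimage of `[𝟙 X]`. That this inverse is
well defined and injective is the condition `f =_π g ↔ i ≫ f = i ≫ g`, and the round trips amount
to `i ≫ r = 𝟙` and `r ≫ i ≫ f =_π f`, the latter following from the condition and `i ≫ r = 𝟙`.
-/

namespace QFunctor

variable {X : C} (π : 𝟙_ C ⟶ X)

def mk {Y : C} (f : X ⟶ Y) : (QFunctor π).obj Y :=
  Quot.mk _ f

variable {π}

lemma mk_surjective {Y : C} : Function.Surjective (mk π : (X ⟶ Y) → _) :=
  Quot.exists_rep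

lemma mk_eq_mk_iff {Y : C} {f g : X ⟶ Y} : mk π f = mk π g ↔ AsEq π f g :=
  Quot.eq.trans (Equivalence.eqvGen_iff ⟨fun _ => rfl, Eq.symm, Eq.trans⟩)

lemma map_mk {Y Z : C} (k : Y ⟶ Z) (f : X ⟶ Y) : (QFunctor π).map k (mk π f) = mk π (f ≫ k) :=
  rfl

end QFunctor

lemma isSupport_iff_nonempty_corepresentableBy {X : C} (π : 𝟙_ C ⟶ X) (Xπ : C) :
    IsSupport π Xπ ↔ Nonempty ((QFunctor π).CorepresentableBy Xπ) :=
  Functor.corepresentableByEquiv.nonempty_congr.symm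

lemma exists_sectionRetraction_of_corepresentableBy {X Xπ : C} {π : 𝟙_ C ⟶ X}
    (e : (QFunctor π).CorepresentableBy Xπ) :
    ∃ (i : Xπ ⟶ X) (r : X ⟶ Xπ), i ≫ r = 𝟙 Xπ ∧
      ∀ (Y : C) (f g : X ⟶ Y), AsEq π f g ↔ i ≫ f = i ≫ g := by
  set i := e.homEquiv.symm (QFunctor.mk π (𝟙 X))
  obtain ⟨r, hr⟩ := QFunctor.mk_surjective (e.homEquiv (𝟙 Xπ))
  have homEquiv_symm_mk {Y : C} (f : X ⟶ Y) : e.homEquiv.symm (QFunctor.mk π f) = i ≫ f := by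
    rw [e.homEquiv_symm_comp, QFunctor.map_mk, Category.id_comp]
  refine ⟨i, r, ?_, fun Y f g => ?_⟩
  · rw [← homEquiv_symm_mk, hr, Equiv.symm_apply_apply]
  · rw [← QFunctor.mk_eq_mk_iff, ← homEquiv_symm_mk, ← homEquiv_symm_mk,
      e.homEquiv.symm.apply_eq_iff_eq]

def corepresentableByOfSectionRetraction {X Xπ : C} {π : 𝟙_ C ⟶ X} (i : Xπ ⟶ X) (r : X ⟶ Xπ)
    (hir : i ≫ r = 𝟙 Xπ) (hi : ∀ (Y : C) (f g : X ⟶ Y), AsEq π f g ↔ i ≫ f = i ≫ g) :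
    (QFunctor π).CorepresentableBy Xπ where
  homEquiv {Y} :=
    { toFun k := QFunctor.mk π (r ≫ k)
      invFun := (Quot.lift (i ≫ ·) fun f g => (hi Y f g).mp : (QFunctor π).obj Y → (Xπ ⟶ Y))
      left_inv k := (reassoc_of% hir) k
      right_inv := QFunctor.mk_surjective.forall.2 fun f =>
        QFunctor.mk_eq_mk_iff.2 <| (hi Y _ f).2 ((reassoc_of% hir) (i ≫ f)) }
  homEquiv_comp g f := congrArg (QFunctor.mk π) (Category.assoc r f g).symm

/-- `Xπ` is a support of `π : I ⟶ X` iff there is a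
section–retraction pair `i : Xπ ⟶ X`, `r : X ⟶ Xπ` such that for all `f g : X ⟶ Y`,
`f =_π g ↔ i ≫ f = i ≫ g`. -/
theorem isSupport_iff_sectionRetraction {X : C} (π : 𝟙_ C ⟶ X) (Xπ : C) :
    IsSupport π Xπ ↔
      ∃ (i : Xπ ⟶ X) (r : X ⟶ Xπ), i ≫ r = 𝟙 Xπ ∧
        ∀ (Y : C) (f g : X ⟶ Y), AsEq π f g ↔ i ≫ f = i ≫ g := by
  rw [isSupport_iff_nonempty_corepresentableBy]
  exact ⟨fun ⟨e⟩ => exists_sectionRetraction_of_corepresentableBy e,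
    fun ⟨i, r, hir, hi⟩ => ⟨corepresentableByOfSectionRetraction i r hir hi⟩⟩

end MarkovCategory
end

section
/- Let π : I → X and f : X → Y in a Markov category with support objects X_π and Y_{π;f} (with sections i_π, i_{π;f} and retractions r_π, r_{π;f}). Then the map sending a Bayesian inverse-with-support g : Y_{π;f} → X_π to r_{π;f} ; g ; i_π, and the map sending an ordinary Bayesian inverse h : Y → X to i_{π;f} ; h ; r_π, establish a bijection between Bayesian inverses-with-support of f at π and (π;f)-almost-sure equivalence classes of ordinary Bayesian inverses of f at π. -/
open CategoryTheory MonoidalCategory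

universe v u

/-!
`π`-almost-sure equality of maps out of `X`, and Bayes' law for a map `h : Y ⟶ X`, depend on a map
only through its joint state with the prior (`π ≫ copy X ≫ (X ◁ u)`, resp. with `π ≫ f`). Hence
precomposing with a Bayesian inverse turns `π`-a.s. equal maps into `(π ≫ f)`-a.s. equal ones, and
Bayes' law is invariant under `(π ≫ f)`-a.s. equality. As `r ≫ i` is `π`-a.s. the identity and
`r' ≫ i'` is `(π ≫ f)`-a.s. the identity, `h ↦ r' ≫ (i' ≫ h ≫ r) ≫ i` sends a Bayesian inverse to
an a.s. equal one, while `i' ≫ (r' ≫ g ≫ i) ≫ r = g` holds on the nose.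
-/

namespace MarkovCategory

variable {C : Type u} [Category.{v} C] [MonoidalCategory C] [SymmetricCategory C]
  [_root_.MarkovCategory C]

lemma copy_comp_whiskerRight {X Z : C} (w : X ⟶ Z) :
    copy X ≫ (w ▷ X) = copy X ≫ (X ◁ w) ≫ (β_ X Z).hom := by
  conv_lhs => rw [← copy_comm X]
  rw [Category.assoc, ← BraidedCategory.braiding_naturality_right]

lemma copy_comp_whiskerLeft {X Z : C} (w : X ⟶ Z) :
    copy X ≫ (X ◁ w) = copy X ≫ (w ▷ X) ≫ (β_ Z X).hom := by
  conv_lhs => rw [← copy_comm X]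
  rw [Category.assoc, ← BraidedCategory.braiding_naturality_left]

section AsEq

variable {X Y Z : C} {π : 𝟙_ C ⟶ X}

lemma AsEq.symm {u v : X ⟶ Y} (h : AsEq π u v) : AsEq π v u :=
  Eq.symm h

lemma AsEq.trans {u v w : X ⟶ Y} (huv : AsEq π u v) (hvw : AsEq π v w) : AsEq π u w :=
  Eq.trans huv hvw

lemma AsEq.comp_right {u v : X ⟶ Y} (huv : AsEq π u v) (w : Y ⟶ Z) :
    AsEq π (u ≫ w) (v ≫ w) := by
  unfold AsEq at huv ⊢
  simp only [whiskerLeft_comp, ← Category.assoc] at huv ⊢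
  rw [huv]

lemma asEq_of_comp_section_eq {Xπ : C} {i : Xπ ⟶ X}
    (hsupp : ∀ (Z : C) (u v : X ⟶ Z), i ≫ u = i ≫ v → AsEq π u v)
    {r : X ⟶ Xπ} (hir : i ≫ r = 𝟙 Xπ) : AsEq π (r ≫ i) (𝟙 X) :=
  hsupp X _ _ (by rw [reassoc_of% hir, Category.comp_id])

end AsEq

namespace BayesInv

variable {X Y Z : C} {π : 𝟙_ C ⟶ X} {f : X ⟶ Y} {h : Y ⟶ X}

lemma asEq_comp (hb : BayesInv π f h) {u v : X ⟶ Z} (huv : AsEq π u v) :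
    AsEq (π ≫ f) (h ≫ u) (h ≫ v) := by
  -- Bayes' law moves `h ≫ w` across to a whiskering of `π ≫ copy X` by `w` itself.
  have joint : ∀ w : X ⟶ Z, π ≫ f ≫ copy Y ≫ (Y ◁ (h ≫ w)) =
      (π ≫ copy X ≫ (X ◁ w)) ≫ (β_ X Z).hom ≫ (Z ◁ f) ≫ (β_ Z Y).hom := fun w => by
    calc π ≫ f ≫ copy Y ≫ (Y ◁ (h ≫ w))
        = (π ≫ f ≫ copy Y ≫ (h ▷ Y)) ≫ (β_ X Y).hom ≫ (Y ◁ w) := by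
          rw [whiskerLeft_comp, reassoc_of% copy_comp_whiskerLeft h]
          simp only [Category.assoc]
      _ = π ≫ copy X ≫ (X ◁ f) ≫ (w ▷ Y) ≫ (β_ Z Y).hom := by
          rw [← hb, BraidedCategory.braiding_naturality_left]
          simp only [Category.assoc]
      _ = (π ≫ copy X ≫ (X ◁ w)) ≫ (β_ X Z).hom ≫ (Z ◁ f) ≫ (β_ Z Y).hom := by
          rw [whisker_exchange_assoc, reassoc_of% copy_comp_whiskerRight w]
          simp only [Category.assoc]
  unfold AsEq at huv ⊢
  simp only [Category.assoc] at joint ⊢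
  rw [joint, joint, reassoc_of% huv]

lemma of_asEq (hb : BayesInv π f h) {h' : Y ⟶ X} (hh' : AsEq (π ≫ f) h h') :
    BayesInv π f h' := by
  unfold BayesInv at hb ⊢
  unfold AsEq at hh'
  simp only [Category.assoc] at hh'
  rw [hb, copy_comp_whiskerRight h, copy_comp_whiskerRight h', reassoc_of% hh']

end BayesInv

section Support

variable {X Y Xπ Yπf : C} {π : 𝟙_ C ⟶ X} {f : X ⟶ Y}
  {i : Xπ ⟶ X} {r : X ⟶ Xπ} {i' : Yπf ⟶ Y} {r' : Y ⟶ Yπf}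

lemma restrict_extend_asEq_self (hir : i ≫ r = 𝟙 Xπ)
    (hsupp : ∀ (Z : C) (u v : X ⟶ Z), i ≫ u = i ≫ v → AsEq π u v)
    (hir' : i' ≫ r' = 𝟙 Yπf)
    (hsupp' : ∀ (Z : C) (u v : Y ⟶ Z), i' ≫ u = i' ≫ v → AsEq (π ≫ f) u v)
    {h : Y ⟶ X} (hb : BayesInv π f h) :
    AsEq (π ≫ f) (r' ≫ (i' ≫ h ≫ r) ≫ i) h := by
  have hY : AsEq (π ≫ f) (r' ≫ i' ≫ h ≫ r ≫ i) (h ≫ r ≫ i) := by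
    simpa using (asEq_of_comp_section_eq hsupp' hir').comp_right (h ≫ r ≫ i)
  have hX : AsEq (π ≫ f) (h ≫ r ≫ i) h := by
    simpa using hb.asEq_comp (asEq_of_comp_section_eq hsupp hir)
  simpa using hY.trans hX

def bayesInvWithSupportEquiv (hir : i ≫ r = 𝟙 Xπ)
    (hsupp : ∀ (Z : C) (u v : X ⟶ Z), i ≫ u = i ≫ v → AsEq π u v)
    (hir' : i' ≫ r' = 𝟙 Yπf)
    (hsupp' : ∀ (Z : C) (u v : Y ⟶ Z), AsEq (π ≫ f) u v ↔ i' ≫ u = i' ≫ v) :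
    {g : Yπf ⟶ Xπ // BayesInv π f (r' ≫ g ≫ i)} ≃
      Quot (fun h h' : {h : Y ⟶ X // BayesInv π f h} => AsEq (π ≫ f) h.1 h'.1) where
  toFun g := Quot.mk _ ⟨r' ≫ g.1 ≫ i, g.2⟩
  invFun := Quot.lift
    (fun h => ⟨i' ≫ h.1 ≫ r, h.2.of_asEq
      (restrict_extend_asEq_self hir hsupp hir' (fun Z u v => (hsupp' Z u v).2) h.2).symm⟩)
    (fun h h' hhh' => Subtype.ext (by
      simp only [← Category.assoc, (hsupp' X h.1 h'.1).1 hhh']))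
  left_inv g := Subtype.ext (by simp [reassoc_of% hir', hir])
  right_inv := Quot.ind fun h => Quot.sound
    (restrict_extend_asEq_self hir hsupp hir' (fun Z u v => (hsupp' Z u v).2) h.2)

end Support

/-- Given support objects `Xπ` of `π` and `Yπf` of `π ≫ f`, the maps
`g ↦ r' ≫ g ≫ i` and `h ↦ i' ≫ h ≫ r` establish a bijection between Bayesian
inverses-with-support of `f` at `π` and `(π ≫ f)`-almost-sure equivalence classes of
ordinary Bayesian inverses of `f` at `π`. -/
theorem bayesInv_with_support_bijection {X Y Xπ Yπf : C} (π : 𝟙_ C ⟶ X) (f : X ⟶ Y)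
    (i : Xπ ⟶ X) (r : X ⟶ Xπ) (hir : i ≫ r = 𝟙 Xπ)
    (hsupp : ∀ (Z : C) (u v : X ⟶ Z), AsEq π u v ↔ i ≫ u = i ≫ v)
    (i' : Yπf ⟶ Y) (r' : Y ⟶ Yπf) (hir' : i' ≫ r' = 𝟙 Yπf)
    (hsupp' : ∀ (Z : C) (u v : Y ⟶ Z), AsEq (π ≫ f) u v ↔ i' ≫ u = i' ≫ v) :
    ∃ e : {g : Yπf ⟶ Xπ // BayesInv π f (r' ≫ g ≫ i)} ≃
        Quot (fun h h' : {h : Y ⟶ X // BayesInv π f h} => AsEq (π ≫ f) h.1 h'.1),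
      (∀ g : {g : Yπf ⟶ Xπ // BayesInv π f (r' ≫ g ≫ i)},
          e g = Quot.mk _ ⟨r' ≫ g.1 ≫ i, g.2⟩) ∧
      (∀ h : {h : Y ⟶ X // BayesInv π f h},
          (e.symm (Quot.mk _ h)).1 = i' ≫ h.1 ≫ r) :=
  ⟨bayesInvWithSupportEquiv hir (fun Z u v => (hsupp Z u v).2) hir' hsupp',
    fun _ => rfl, fun _ => rfl⟩

end MarkovCategory
end

section
/- In a Markov category with support objects, the Bayesian inverse-with-support of f : X → Y at π : I → X, if it exists, is unique (not merely unique up to almost-sure equality). -/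
open CategoryTheory MonoidalCategory

universe v u

/-! Two Bayesian inverses of `f` at `π` are `(π ≫ f)`-almost surely equal, and on the support
`Yπf` almost-sure equality is equality after `i'`. Since `i' ≫ r' = 𝟙` and `i` is split mono,
`i' ≫ r'` and `i` cancel from the two extended inverses, leaving `g = g'`. -/

namespace MarkovCategory

variable {C : Type u} [Category.{v} C] [MonoidalCategory C] [SymmetricCategory C] [_root_.MarkovCategory C]

theorem copy_whiskerLeft_eq_copy_whiskerRight_braiding {X Y : C} (h : Y ⟶ X) :
    copy Y ≫ (Y ◁ h) = copy Y ≫ (h ▷ Y) ≫ (β_ X Y).hom := by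
  rw [BraidedCategory.braiding_naturality_left, ← Category.assoc, copy_comm]

theorem BayesInv.asEq {X Y : C} {π : 𝟙_ C ⟶ X} {f : X ⟶ Y} {h h' : Y ⟶ X}
    (hh : BayesInv π f h) (hh' : BayesInv π f h') : AsEq (π ≫ f) h h' := by
  unfold AsEq
  unfold BayesInv at hh hh'
  simp only [Category.assoc, copy_whiskerLeft_eq_copy_whiskerRight_braiding]
  simp only [← Category.assoc] at hh hh' ⊢
  rw [← hh, hh']

theorem bayesInv_with_support_unique_general {X Y Xπ Yπf : C} (π : 𝟙_ C ⟶ X) (f : X ⟶ Y)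
    (i : Xπ ⟶ X) (r : X ⟶ Xπ) (hir : i ≫ r = 𝟙 Xπ)
    (i' : Yπf ⟶ Y) (r' : Y ⟶ Yπf) (hir' : i' ≫ r' = 𝟙 Yπf)
    (hsupp' : ∀ (Z : C) (u v : Y ⟶ Z), AsEq (π ≫ f) u v ↔ i' ≫ u = i' ≫ v)
    (g g' : Yπf ⟶ Xπ)
    (hg : BayesInv π f (r' ≫ g ≫ i)) (hg' : BayesInv π f (r' ≫ g' ≫ i)) :
    g = g' := by
  have : IsSplitMono i := .mk' ⟨r, hir⟩
  have hcomp := (hsupp' _ _ _).mp (hg.asEq hg')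
  simp only [← Category.assoc, hir', Category.id_comp] at hcomp
  exact (cancel_mono i).mp hcomp

/-- The Bayesian inverse-with-support of `f` at `π`, if it exists,
is unique on the nose. -/
theorem bayesInv_with_support_unique {X Y Xπ Yπf : C} (π : 𝟙_ C ⟶ X) (f : X ⟶ Y)
    (i : Xπ ⟶ X) (r : X ⟶ Xπ) (hir : i ≫ r = 𝟙 Xπ)
    (hsupp : ∀ (Z : C) (u v : X ⟶ Z), AsEq π u v ↔ i ≫ u = i ≫ v)
    (i' : Yπf ⟶ Y) (r' : Y ⟶ Yπf) (hir' : i' ≫ r' = 𝟙 Yπf)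
    (hsupp' : ∀ (Z : C) (u v : Y ⟶ Z), AsEq (π ≫ f) u v ↔ i' ≫ u = i' ≫ v)
    (g g' : Yπf ⟶ Xπ)
    (hg : BayesInv π f (r' ≫ g ≫ i)) (hg' : BayesInv π f (r' ≫ g' ≫ i)) :
    g = g' :=
  bayesInv_with_support_unique_general π f i r hir i' r' hir' hsupp' g g' hg hg'

end MarkovCategory
end

section
/- In a Markov category, if h : Y → X is a Bayesian inverse of f : X → Y at π : I → X and k : Z → Y is a Bayesian inverse of g : Y → Z at π;f : I → Y, then k ; h is a Bayesian inverse of f ; g at π. -/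
open CategoryTheory MonoidalCategory

universe v u

namespace MarkovCategory

variable {C : Type u} [Category.{v} C] [MonoidalCategory C] [SymmetricCategory C] [_root_.MarkovCategory C]

theorem BayesInv.copy_whiskerLeft_comp {X Y Z : C} {π : 𝟙_ C ⟶ X} {f : X ⟶ Y} {h : Y ⟶ X}
    (hf : BayesInv π f h) (g : Y ⟶ Z) :
    π ≫ copy X ≫ X ◁ (f ≫ g) = π ≫ f ≫ copy Y ≫ Y ◁ g ≫ h ▷ Z := by
  unfold BayesInv at hf
  calc π ≫ copy X ≫ X ◁ (f ≫ g)
      = (π ≫ copy X ≫ X ◁ f) ≫ X ◁ g := by simp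
    _ = (π ≫ f ≫ copy Y ≫ h ▷ Y) ≫ X ◁ g := by rw [hf]
    _ = π ≫ f ≫ copy Y ≫ Y ◁ g ≫ h ▷ Z := by simp [whisker_exchange]

/-- Composites of Bayesian inverses are Bayesian inverses: if `h` is
a Bayesian inverse of `f` at `π` and `k` is a Bayesian inverse of `g` at `π ≫ f`,
then `k ≫ h` is a Bayesian inverse of `f ≫ g` at `π`. -/
theorem bayesInv_comp {X Y Z : C} (π : 𝟙_ C ⟶ X) (f : X ⟶ Y) (g : Y ⟶ Z)
    (h : Y ⟶ X) (k : Z ⟶ Y)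
    (hf : BayesInv π f h) (hg : BayesInv (π ≫ f) g k) :
    BayesInv π (f ≫ g) (k ≫ h) := by
  unfold BayesInv at hg ⊢
  calc π ≫ copy X ≫ X ◁ (f ≫ g)
      = ((π ≫ f) ≫ copy Y ≫ Y ◁ g) ≫ h ▷ Z := by
        rw [hf.copy_whiskerLeft_comp g]; simp
    _ = ((π ≫ f) ≫ g ≫ copy Z ≫ k ▷ Z) ≫ h ▷ Z := by rw [hg]
    _ = π ≫ (f ≫ g) ≫ copy Z ≫ (k ≫ h) ▷ Z := by simp

end MarkovCategory
end

section
/- In a Markov category, any two Bayesian inverses of f : X → Y at π : I → X are (π;f)-almost-surely equal. -/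
open CategoryTheory MonoidalCategory

universe v u

namespace MarkovCategory

variable {C : Type u} [Category.{v} C] [MonoidalCategory C] [SymmetricCategory C] [_root_.MarkovCategory C]

theorem copy_whiskerLeft_eq {X Y : C} (k : Y ⟶ X) :
    copy Y ≫ (Y ◁ k) = copy Y ≫ (k ▷ Y) ≫ (β_ X Y).hom := by
  conv_lhs => rw [← copy_comm Y]
  rw [Category.assoc, BraidedCategory.braiding_naturality_left]

theorem asEq_of_copy_whiskerRight_eq {X Y : C} (σ : 𝟙_ C ⟶ X) {g g' : X ⟶ Y}
    (e : σ ≫ copy X ≫ (g ▷ X) = σ ≫ copy X ≫ (g' ▷ X)) : AsEq σ g g' := by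
  unfold AsEq
  rw [copy_whiskerLeft_eq, copy_whiskerLeft_eq]
  simp only [← Category.assoc] at e ⊢
  rw [e]

/-- Any two Bayesian inverses of `f` at `π` are `(π ≫ f)`-almost-surely
equal. -/
theorem bayesInv_asEq_unique {X Y : C} (π : 𝟙_ C ⟶ X) (f : X ⟶ Y) (h h' : Y ⟶ X)
    (hh : BayesInv π f h) (hh' : BayesInv π f h') : AsEq (π ≫ f) h h' :=
  asEq_of_copy_whiskerRight_eq (π ≫ f) (by simpa only [Category.assoc] using hh.symm.trans hh')

end MarkovCategory
end

section
/- In a Markov category with support objects and Bayesian inverses: for π : I → X, let C = copy_X and L : X⊗X → X the left marginal projection. Then the Bayesian inverses-with-support C^♯_π : (X⊗X)_{π;C} → X_π and L^♯_{π;C} : X_π → (X⊗X)_{π;C} satisfy L^♯_{π;C} ; C^♯_π = id_{X_π} and C^♯_π ; L^♯_{π;C} = id_{(X⊗X)_{π;C}}; hence (X⊗X)_{π;copy_X} ≅ X_π. -/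
open CategoryTheory MonoidalCategory

universe v u

namespace MarkovCategory

variable {C : Type u} [Category.{v} C] [MonoidalCategory C] [SymmetricCategory C] [_root_.MarkovCategory C]

/-- The left marginalisation map `X ⊗ X ⟶ X`. -/
def lmarg (X : C) : X ⊗ X ⟶ X := (X ◁ del X) ≫ (ρ_ X).hom

/-!
Both Bayesian inverses can be computed almost surely: `rπ ≫ L♯ ≫ iC` is `π`-a.s. equal to
`copy X`, and `rC ≫ C♯ ≫ iπ` is `(π ≫ copy X)`-a.s. equal to `lmarg X`. Since the supports
detect almost-sure equality, this gives `L♯ ≫ iC = iπ ≫ copy X` and `C♯ ≫ iπ = iC ≫ lmarg X`.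
Now `copy X ≫ lmarg X = 𝟙`, and `lmarg X ≫ copy X = 𝟙` holds `(π ≫ copy X)`-a.s. because that
state lives on the diagonal; cancelling the split monos `iπ`, `iC` gives the two identities.
-/

lemma copy_whiskerLeft_copy_assoc_inv (X : C) :
    copy X ≫ X ◁ copy X ≫ (α_ X X X).inv = copy X ≫ copy X ▷ X := by
  rw [← reassoc_of% copy_assoc X]; simp

lemma copy_whiskerLeft_copy_braiding (X : C) :
    copy X ≫ X ◁ copy X ≫ (α_ X X X).inv ≫ (β_ X X).hom ▷ X ≫ (α_ X X X).hom =
      copy X ≫ X ◁ copy X := by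
  rw [reassoc_of% copy_whiskerLeft_copy_assoc_inv, ← comp_whiskerRight_assoc, copy_comm,
    copy_assoc]

lemma copy_tensorHom_copy (X : C) :
    copy X ≫ (copy X ⊗ₘ copy X) =
      copy X ≫ X ◁ (copy X ≫ X ◁ copy X) ≫ (α_ X X (X ⊗ X)).inv := by
  rw [MonoidalCategory.tensorHom_def, reassoc_of% (copy_whiskerLeft_copy_assoc_inv X).symm,
    ← associator_inv_naturality_right]
  simp

lemma copy_comp_copy_tensor (X : C) :
    copy X ≫ copy (X ⊗ X) = copy X ≫ (copy X ⊗ₘ copy X) := by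
  rw [copy_tensor, reassoc_of% copy_tensorHom_copy, copy_tensorHom_copy, tensorμ]
  simp only [Category.assoc, Iso.inv_hom_id_assoc, ← whiskerLeft_comp_assoc,
    copy_whiskerLeft_copy_braiding]

lemma copy_lmarg (X : C) : copy X ≫ lmarg X = 𝟙 X := by
  rw [lmarg, reassoc_of% copy_del_right]; simp

lemma copy_comp_copy_whiskerLeft_lmarg (X : C) :
    copy X ≫ copy (X ⊗ X) ≫ (X ⊗ X) ◁ lmarg X = copy X ≫ copy X ▷ X := by
  rw [reassoc_of% copy_comp_copy_tensor, tensorHom_comp_whiskerLeft, copy_lmarg, tensorHom_id]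

lemma copy_whiskerRight_braiding {X Y : C} (f : X ⟶ Y) :
    copy X ≫ f ▷ X ≫ (β_ Y X).hom = copy X ≫ X ◁ f := by
  rw [BraidedCategory.braiding_naturality_left, reassoc_of% copy_comm]

lemma asEq_iff_whiskerRight {X Y : C} (π : 𝟙_ C ⟶ X) (f g : X ⟶ Y) :
    AsEq π f g ↔ π ≫ copy X ≫ f ▷ X = π ≫ copy X ≫ g ▷ X := by
  rw [AsEq, ← copy_whiskerRight_braiding, ← copy_whiskerRight_braiding g]
  simp only [← Category.assoc, cancel_mono]

lemma bayesInv_lmarg_iff {X : C} (π : 𝟙_ C ⟶ X) (h : X ⟶ X ⊗ X) :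
    BayesInv (π ≫ copy X) (lmarg X) h ↔ AsEq π h (copy X) := by
  rw [BayesInv, asEq_iff_whiskerRight, Category.assoc, Category.assoc,
    copy_comp_copy_whiskerLeft_lmarg, reassoc_of% copy_lmarg, eq_comm]

lemma bayesInv_copy_iff {X : C} (π : 𝟙_ C ⟶ X) (h : X ⊗ X ⟶ X) :
    BayesInv π (copy X) h ↔ AsEq (π ≫ copy X) h (lmarg X) := by
  have hcopy : copy X ≫ copy X ▷ X = copy X ≫ X ◁ copy X ≫ (β_ X (X ⊗ X)).hom := by
    rw [BraidedCategory.braiding_naturality_right, reassoc_of% copy_comm]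
  rw [BayesInv, AsEq, Category.assoc, Category.assoc, copy_comp_copy_whiskerLeft_lmarg,
    ← copy_whiskerRight_braiding h, hcopy]
  simp only [← Category.assoc, cancel_mono]
  exact eq_comm

lemma asEq_lmarg_comp_copy {X : C} (π : 𝟙_ C ⟶ X) :
    AsEq (π ≫ copy X) (lmarg X ≫ copy X) (𝟙 (X ⊗ X)) := by
  rw [AsEq, whiskerLeft_comp, whiskerLeft_id, Category.comp_id, Category.assoc, Category.assoc,
    reassoc_of% copy_comp_copy_whiskerLeft_lmarg, copy_comp_copy_tensor,
    MonoidalCategory.tensorHom_def]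

/-- The Bayesian inverses-with-support of copy and of left
marginalisation are mutually inverse, so `(X ⊗ X)_{π ≫ copy X} ≅ X_π`. -/
theorem copy_support_iso {X Xπ XXc : C} (π : 𝟙_ C ⟶ X)
    (iπ : Xπ ⟶ X) (rπ : X ⟶ Xπ) (hirπ : iπ ≫ rπ = 𝟙 Xπ)
    (hsuppπ : ∀ (W : C) (u v : X ⟶ W), AsEq π u v ↔ iπ ≫ u = iπ ≫ v)
    (iC : XXc ⟶ X ⊗ X) (rC : X ⊗ X ⟶ XXc) (hirC : iC ≫ rC = 𝟙 XXc)
    (hsuppC : ∀ (W : C) (u v : X ⊗ X ⟶ W),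
      AsEq (π ≫ copy X) u v ↔ iC ≫ u = iC ≫ v)
    (Csharp : XXc ⟶ Xπ) (hC : BayesInv π (copy X) (rC ≫ Csharp ≫ iπ))
    (Lsharp : Xπ ⟶ XXc) (hL : BayesInv (π ≫ copy X) (lmarg X) (rπ ≫ Lsharp ≫ iC)) :
    Lsharp ≫ Csharp = 𝟙 Xπ ∧ Csharp ≫ Lsharp = 𝟙 XXc ∧ Nonempty (XXc ≅ Xπ) := by
  have : IsSplitMono iπ := .mk' ⟨rπ, hirπ⟩
  have : IsSplitMono iC := .mk' ⟨rC, hirC⟩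
  have hLsharp : Lsharp ≫ iC = iπ ≫ copy X := by
    simpa [reassoc_of% hirπ] using (hsuppπ _ _ _).1 ((bayesInv_lmarg_iff π _).1 hL)
  have hCsharp : Csharp ≫ iπ = iC ≫ lmarg X := by
    simpa [reassoc_of% hirC] using (hsuppC _ _ _).1 ((bayesInv_copy_iff π _).1 hC)
  have hLC : Lsharp ≫ Csharp = 𝟙 Xπ := by
    rw [← cancel_mono iπ, Category.assoc, hCsharp, reassoc_of% hLsharp, copy_lmarg]
    simp
  have hCL : Csharp ≫ Lsharp = 𝟙 XXc := by
    rw [← cancel_mono iC, Category.assoc, hLsharp, reassoc_of% hCsharp,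
      (hsuppC _ _ _).1 (asEq_lmarg_comp_copy π)]
    simp
  exact ⟨hLC, hCL, ⟨⟨Csharp, Lsharp, hCL, hLC⟩⟩⟩

end MarkovCategory
end

section
/- In the Kleisli category FinStoch of finitely supported probability distributions on finite sets (finite stochastic matrices), every state π : I → X (probability distribution on the finite set X) admits a support object, given by the subset supp(π) = {x ∈ X : π(x) > 0} with section the inclusion-as-point-mass stochastic map and retraction any stochastic map restricting to the identity on supp(π). -/
/-!
Precomposing with `incl` evaluates a stochastic map on `supp π`, so `incl ≫ f = incl ≫ g` is
exactly `π`-almost-sure equality, and `incl ≫ r` is the identity as soon as `r` fixes `supp π`.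
Such an `r` exists because `supp π` is nonempty: it may send the rest of `X` to any point of it.
-/

open CategoryTheory

/-- The Markov category `FinStoch`: objects are finite sets and morphisms are
finite stochastic matrices, i.e. functions into (finitely supported) probability
distributions, composed by matrix multiplication (Kleisli composition for `PMF`). -/
structure FinStoch where
  carrier : Type
  [fin : Fintype carrier]

attribute [instance] FinStoch.fin

instance : CoeSort FinStoch Type := ⟨FinStoch.carrier⟩

noncomputable instance : Category FinStoch where
  Hom X Y := X → PMF Y
  id X := fun x => PMF.pure x
  comp f g := fun x => (f x).bind g
  id_comp f := by funext x; exact PMF.pure_bind x f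
  comp_id f := by funext x; exact PMF.bind_pure (f x)
  assoc f g h := by funext x; exact PMF.bind_bind (f x) g h

/-- `π'`-almost-sure equality in `FinStoch`: `f` and `g` agree at every point in the
support of `π`. -/
def FinStoch.AsEq {X Y : FinStoch} (π : PMF X) (f g : X ⟶ Y) : Prop :=
  ∀ x : X, π x ≠ 0 → f x = g x

/-- The subset `supp(π) = {x : π x > 0}` as an object of `FinStoch`. -/
noncomputable def FinStoch.suppObj (X : FinStoch) (π : PMF X) : FinStoch :=
  letI : DecidablePred (fun x : X => π x ≠ 0) := Classical.decPred _
  ⟨{x : X // π x ≠ 0}⟩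

/-- The inclusion-as-point-mass stochastic map `supp(π) ⟶ X`. -/
noncomputable def FinStoch.incl (X : FinStoch) (π : PMF X) : X.suppObj π ⟶ X :=
  fun s => PMF.pure s.1

namespace FinStoch

variable {X : FinStoch} {π : PMF X}

theorem incl_comp_apply {Y : FinStoch} (f : X ⟶ Y) (s : X.suppObj π) :
    (X.incl π ≫ f) s = f s.1 :=
  PMF.pure_bind s.1 f

theorem exists_retraction (π : PMF X) :
    ∃ r : X ⟶ X.suppObj π, ∀ (x : X) (h : π x ≠ 0), r x = PMF.pure ⟨x, h⟩ := by
  classical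
  obtain ⟨x₀, hx₀⟩ := π.support_nonempty
  exact ⟨fun x => PMF.pure (if h : π x ≠ 0 then ⟨x, h⟩ else ⟨x₀, hx₀⟩), fun x h => by simp [h]⟩

theorem incl_comp_eq_id {r : X ⟶ X.suppObj π}
    (hr : ∀ (x : X) (h : π x ≠ 0), r x = PMF.pure ⟨x, h⟩) :
    X.incl π ≫ r = 𝟙 (X.suppObj π) :=
  funext fun s => (incl_comp_apply r s).trans (hr s.1 s.2)

theorem asEq_iff_incl_comp_eq {Y : FinStoch} (f g : X ⟶ Y) :
    AsEq π f g ↔ X.incl π ≫ f = X.incl π ≫ g := by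
  constructor
  · intro hfg
    funext s
    rw [incl_comp_apply, incl_comp_apply]
    exact hfg s.1 s.2
  · intro h x hx
    let s : X.suppObj π := ⟨x, hx⟩
    calc f x = (X.incl π ≫ f) s := (incl_comp_apply f s).symm
      _ = (X.incl π ≫ g) s := congrFun h s
      _ = g x := incl_comp_apply g s

end FinStoch

/-- In `FinStoch`, every distribution `π` on a finite set `X` admits
a support object, given by `supp(π) = {x : π x > 0}`, with section the
inclusion-as-point-mass map and retraction any stochastic map restricting to the
identity on `supp(π)`: such retractions exist, and any of them makes `(incl, r)` a
section–retraction pair characterising `π`-almost-sure equality. -/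
theorem finStoch_support_exists (X : FinStoch) (π : PMF X) :
    (∃ r : X ⟶ X.suppObj π, ∀ (x : X) (h : π x ≠ 0), r x = PMF.pure ⟨x, h⟩) ∧
    (∀ r : X ⟶ X.suppObj π, (∀ (x : X) (h : π x ≠ 0), r x = PMF.pure ⟨x, h⟩) →
      X.incl π ≫ r = 𝟙 (X.suppObj π) ∧
      ∀ (Y : FinStoch) (f g : X ⟶ Y),
        FinStoch.AsEq π f g ↔ X.incl π ≫ f = X.incl π ≫ g) :=
  ⟨FinStoch.exists_retraction π, fun _ hr =>
    ⟨FinStoch.incl_comp_eq_id hr, fun _ => FinStoch.asEq_iff_incl_comp_eq⟩⟩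
end
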